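/- arXiv:1406.0797 — 2 statements merged into one kernel-verified Lean document; each statement's English description precedes it below -/
import Mathlib

section
/- Let (a_n)_{n∈ℤ} be an almost periodic sequence of complex numbers and α a real number with α/π irrational. If there exist integers l_n with a_n = −inα − 2πi l_n for all n ∈ ℤ, then (a_n) is unbounded — contradiction with the boundedness of almost periodic sequences. Hence for α/π irrational there is no almost periodic sequence (a_n) and integer sequence (l_n) with exp(a_n) = exp(−inα) and a_n = −inα − 2πi l_n for all n. -/
/-!
The imaginary part `b n = -(n α + 2π l n)` of `a n` is bounded. For a `π`-almost period
`m > 0`, the increments `b (n + m) - b n` lie in `(-π, π)` and in `-m α + 2π ℤ`, so they all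
equal one constant `c`, which is nonzero because `α / π` is irrational. Then
`b (k m) = b 0 + k c` is unbounded.
-/

open Real

/-- A sequence `(a n)` indexed by `ℤ` is almost periodic if for every `ε > 0` there exists
`p > 0` such that every interval of integers of length `p` contains an `m` with
`|a (n + m) - a n| < ε` for all `n`. -/
def AlmostPeriodic (a : ℤ → ℂ) : Prop :=
  ∀ ε : ℝ, 0 < ε → ∃ p : ℕ, 0 < p ∧ ∀ N : ℤ, ∃ m : ℤ, N ≤ m ∧ m < N + p ∧
    ∀ n : ℤ, ‖a (n + m) - a n‖ < ε

namespace AlmostPeriodic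

variable {a : ℤ → ℂ}

/- Every `a j` is within `1` of some `a k` with `0 ≤ k < p`, namely `k = j + m` for a
`1`-almost period `m ∈ [-j, -j + p)`. -/
theorem exists_norm_le (ha : AlmostPeriodic a) : ∃ C, ∀ n, ‖a n‖ ≤ C := by
  obtain ⟨p, -, hp⟩ := ha 1 one_pos
  refine ⟨1 + ∑ k ∈ Finset.Ico (0 : ℤ) p, ‖a k‖, fun j => ?_⟩
  obtain ⟨m, hm_ge, hm_lt, hm⟩ := hp (-j)
  have hmem : j + m ∈ Finset.Ico (0 : ℤ) p := Finset.mem_Ico.mpr ⟨by omega, by omega⟩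
  have hle := Finset.single_le_sum (fun k _ => norm_nonneg (a k)) hmem
  linarith [norm_sub_norm_le (a j) (a (j + m)), norm_sub_rev (a j) (a (j + m)), hm j]

theorem exists_pos_almostPeriod (ha : AlmostPeriodic a) {ε : ℝ} (hε : 0 < ε) :
    ∃ m > 0, ∀ n, ‖a (n + m) - a n‖ < ε := by
  obtain ⟨p, -, hp⟩ := ha ε hε
  obtain ⟨m, hm_ge, -, hm⟩ := hp 1
  exact ⟨m, by omega, hm⟩

end AlmostPeriodic

theorem eq_of_sub_eq_intCast_mul {T x y : ℝ} {k : ℤ} (hxy : x - y = k * T)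
    (hx : |x| < T / 2) (hy : |y| < T / 2) : x = y := by
  have hT : 0 < T := by linarith [abs_nonneg x]
  have hk : |(k : ℝ)| * T < 1 * T := by
    rw [← abs_of_pos hT, ← abs_mul, ← hxy, abs_of_pos hT]
    linarith [abs_sub x y]
  have hk0 : k = 0 := Int.abs_lt_one_iff.mp (by exact_mod_cast lt_of_mul_lt_mul_right hk hT.le)
  simpa [hk0, sub_eq_zero] using hxy

theorem not_exists_abs_le_of_add_const {b : ℤ → ℝ} {m : ℤ} {c : ℝ} (hc : c ≠ 0)
    (hb : ∀ n, b (n + m) = b n + c) : ¬ ∃ C, ∀ n, |b n| ≤ C := by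
  rintro ⟨C, hC⟩
  have hiter : ∀ k : ℕ, b (k * m) = b 0 + k * c := by
    intro k
    induction k with
    | zero => simp
    | succ k ih => rw [Nat.cast_succ, add_one_mul, hb, ih]; push_cast; ring
  obtain ⟨k, hk⟩ := exists_nat_gt (2 * C / |c|)
  have hkc : 2 * C < k * |c| := (div_lt_iff₀ (abs_pos.mpr hc)).mp hk
  have hsum : |(k : ℝ) * c| ≤ |b (k * m)| + |b 0| := by
    rw [hiter]
    simpa using abs_add_le (b 0 + k * c) (-b 0)
  rw [abs_mul, Nat.abs_cast] at hsum
  linarith [hC (k * m), hC 0]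

theorem mul_add_two_pi_mul_ne_zero {α : ℝ} (hα : Irrational (α / π)) {m : ℤ} (hm : m ≠ 0)
    (d : ℤ) : m * α + 2 * π * d ≠ 0 := by
  intro h
  apply (hα.intCast_mul hm).ne_int (-2 * d)
  field_simp
  push_cast
  linarith

theorem stmt_5 (α : ℝ) (hα : Irrational (α / π)) :
    ¬ ∃ (a : ℤ → ℂ) (l : ℤ → ℤ), AlmostPeriodic a ∧
      (∀ n : ℤ, Complex.exp (a n) = Complex.exp (-(n * α * Complex.I))) ∧
      (∀ n : ℤ, a n = -(n * α * Complex.I) - 2 * π * Complex.I * l n) := by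
  rintro ⟨a, l, hap, -, ha⟩
  set b : ℤ → ℝ := fun n => (a n).im
  have hb : ∀ n, b n = -(n * α + 2 * π * l n) := fun n => by simp [b, ha n]; ring
  obtain ⟨C, hC⟩ := hap.exists_norm_le
  obtain ⟨m, hm, hper⟩ := hap.exists_pos_almostPeriod pi_pos
  have hstep : ∀ n, |b (n + m) - b n| < 2 * π / 2 := fun n => by
    rw [mul_div_cancel_left₀ π two_ne_zero, ← Complex.sub_im]
    exact (Complex.abs_im_le_norm _).trans_lt (hper n)
  have hconst : ∀ n, b (n + m) = b n + (b (0 + m) - b 0) := fun n => by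
    have := eq_of_sub_eq_intCast_mul (k := l (0 + m) - l 0 - (l (n + m) - l n))
      (by simp only [hb]; push_cast; ring) (hstep n) (hstep 0)
    linarith
  have hc : b (0 + m) - b 0 ≠ 0 := by
    rw [show b (0 + m) - b 0 = -(m * α + 2 * π * (l m - l 0 : ℤ)) by
      simp only [hb, zero_add]; push_cast; ring]
    exact neg_ne_zero.mpr (mul_add_two_pi_mul_ne_zero hα hm.ne' _)
  exact not_exists_abs_le_of_add_const hc hconst
    ⟨C, fun n => (Complex.abs_im_le_norm (a n)).trans (hC n)⟩
end

section
/- The map f: M(𝕋) → ℓ^∞(ℤ) given by f(μ) = (μ̂(n))_{n∈ℤ} does not have dense range. Concretely, there exists c > 0 such that for every measure μ ∈ M(𝕋), sup_{n∈ℤ} |μ̂(n) − a_n| > c, where a_n = 1 for n ≥ 0 and a_n = 0 for n < 0. -/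
/-!
Write `μ = f dν`. Pointwise, the Cesàro means `N⁻¹ ∑_{n=1}^{N} e^{± i n x}` are bounded by `1` and
tend to the indicator of `{0}`, so by dominated convergence the Cesàro means of `μ̂(n)` over
`n = 1, …, N` and over `n = -1, …, -N` both tend to `μ({0})`. If `μ̂` were within `1/3` of
`1_{n ≥ 0}` everywhere, `μ({0})` would be within `1/3` of both `1` and `0`.
-/

open Real MeasureTheory Filter Topology Finset

section Cesaro

variable {E : Type*} [NormedAddCommGroup E] [NormedSpace ℝ E]

theorem norm_cesaro_le {u : ℕ → E} {C : ℝ} (h : ∀ n, ‖u n‖ ≤ C) (N : ℕ) :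
    ‖(N⁻¹ : ℝ) • ∑ n ∈ range N, u n‖ ≤ C := by
  rcases N.eq_zero_or_pos with rfl | hN
  · simpa using (norm_nonneg _).trans (h 0)
  calc ‖(N⁻¹ : ℝ) • ∑ n ∈ range N, u n‖
      ≤ (N⁻¹ : ℝ) * ∑ n ∈ range N, ‖u n‖ := by
        rw [norm_smul, Real.norm_of_nonneg (by positivity)]
        gcongr
        exact norm_sum_le _ _
    _ ≤ (N⁻¹ : ℝ) * ∑ n ∈ range N, C := by gcongr with n; exact h n
    _ = C := by
        rw [sum_const, card_range, nsmul_eq_mul, ← mul_assoc, inv_mul_cancel₀ (by positivity),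
          one_mul]

theorem norm_sub_le_of_tendsto_cesaro {u : ℕ → E} {z a : E} {c : ℝ}
    (hu : Tendsto (fun N : ℕ => (N⁻¹ : ℝ) • ∑ n ∈ range N, u n) atTop (𝓝 z))
    (h : ∀ n, ‖u n - a‖ ≤ c) : ‖z - a‖ ≤ c := by
  have hsub : Tendsto (fun N : ℕ => (N⁻¹ : ℝ) • ∑ n ∈ range N, (u n - a)) atTop (𝓝 (z - a)) := by
    simpa only [sum_sub_distrib, smul_sub] using hu.sub (tendsto_const_nhds (x := a)).cesaro_smul
  exact le_of_tendsto' hsub.norm (norm_cesaro_le h)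

end Cesaro

theorem norm_sum_range_pow_succ_le {w : ℂ} (hw : ‖w‖ ≤ 1) (hw1 : w ≠ 1) (N : ℕ) :
    ‖∑ n ∈ range N, w ^ (n + 1)‖ ≤ 2 / ‖w - 1‖ := by
  have hsum : ∑ n ∈ range N, w ^ (n + 1) = w * ((w ^ N - 1) / (w - 1)) := by
    simp only [pow_succ', ← mul_sum, geom_sum_eq hw1]
  have hnum : ‖w ^ N - 1‖ ≤ 2 := calc
    ‖w ^ N - 1‖ ≤ ‖w‖ ^ N + ‖(1 : ℂ)‖ := by rw [← norm_pow]; exact norm_sub_le _ _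
    _ ≤ 2 := by rw [norm_one]; linarith [pow_le_one₀ (n := N) (norm_nonneg w) hw]
  rw [hsum, norm_mul, norm_div]
  calc ‖w‖ * (‖w ^ N - 1‖ / ‖w - 1‖) ≤ 1 * (2 / ‖w - 1‖) := by gcongr
    _ = 2 / ‖w - 1‖ := one_mul _

theorem tendsto_cesaro_pow_succ {w : ℂ} (hw : ‖w‖ ≤ 1) :
    Tendsto (fun N : ℕ => (N⁻¹ : ℝ) • ∑ n ∈ range N, w ^ (n + 1)) atTop
      (𝓝 (if w = 1 then 1 else 0)) := by
  split_ifs with hw1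
  · subst hw1
    simpa only [one_pow] using (tendsto_const_nhds (x := (1 : ℂ))).cesaro_smul
  · refine tendsto_inv_atTop_nhds_zero_nat.zero_smul_isBoundedUnder_le ?_
    exact isBoundedUnder_of ⟨_, norm_sum_range_pow_succ_le hw hw1⟩

theorem tendsto_integral_mul_of_tendsto {α : Type*} [MeasurableSpace α] {μ : Measure α}
    {f : α → ℂ} (hf : Integrable f μ) {g : ℕ → α → ℂ} {h : α → ℂ}
    (hg_meas : ∀ N, AEStronglyMeasurable (g N) μ) (hg_le : ∀ N x, ‖g N x‖ ≤ 1)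
    (hg : ∀ x, Tendsto (fun N => g N x) atTop (𝓝 (h x))) :
    Tendsto (fun N => ∫ x, g N x * f x ∂μ) atTop (𝓝 (∫ x, h x * f x ∂μ)) := by
  refine tendsto_integral_of_dominated_convergence (fun x => ‖f x‖)
    (fun N => (hg_meas N).mul hf.aestronglyMeasurable) hf.norm (fun N => ?_)
    (ae_of_all _ fun x => (hg x).mul_const (f x))
  refine ae_of_all _ fun x => ?_
  simpa only [norm_mul] using mul_le_of_le_one_left (norm_nonneg _) (hg_le N x)

section Fourier

variable {T : ℝ}

theorem norm_fourier_apply (m : ℤ) (x : AddCircle T) : ‖fourier m x‖ = 1 :=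
  Circle.norm_coe _

theorem fourier_mul_natCast (m : ℤ) (k : ℕ) (x : AddCircle T) :
    fourier (m * k) x = fourier m x ^ k := by
  rw [fourier_apply, fourier_apply, mul_comm, mul_zsmul, natCast_zsmul, AddCircle.toCircle_nsmul]
  rfl

theorem fourier_neg_apply_eq_one_iff {m : ℤ} {x : AddCircle T} :
    fourier (-m) x = 1 ↔ fourier m x = 1 := by
  rw [fourier_neg, map_eq_one_iff _ (RingHom.injective _)]

theorem tendsto_cesaro_integral_fourier {ν : Measure (AddCircle T)} [IsFiniteMeasure ν]
    {f : AddCircle T → ℂ} (hf : Integrable f ν) (m : ℤ) :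
    Tendsto (fun N : ℕ => (N⁻¹ : ℝ) • ∑ n ∈ range N, ∫ x, fourier (m * (n + 1)) x * f x ∂ν)
      atTop (𝓝 (∫ x, {x | fourier m x = 1}.indicator f x ∂ν)) := by
  have hpow : ∀ (n : ℕ) (x : AddCircle T), fourier (m * (n + 1)) x = fourier m x ^ (n + 1) :=
    fun n x => by exact_mod_cast fourier_mul_natCast m (n + 1) x
  have hint : ∀ n : ℕ, Integrable (fun x => fourier m x ^ (n + 1) * f x) ν := fun n => by
    simpa only [← hpow] using hf.bdd_mul (fourier _).continuous.aestronglyMeasurable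
      (ae_of_all _ fun x => (norm_fourier_apply _ x).le)
  have hmean : ∀ N : ℕ, (N⁻¹ : ℝ) • ∑ n ∈ range N, ∫ x, fourier (m * (n + 1)) x * f x ∂ν =
      ∫ x, ((N⁻¹ : ℝ) • ∑ n ∈ range N, fourier m x ^ (n + 1)) * f x ∂ν := fun N => by
    simp only [hpow, ← integral_finsetSum _ fun n _ => hint n, ← integral_smul, smul_mul_assoc,
      sum_mul]
  have hindicator : ∀ x, {x | fourier m x = 1}.indicator f x =
      (if fourier m x = 1 then 1 else 0) * f x := fun x => by
    simp only [Set.indicator_apply, Set.mem_ofPred_eq, ite_mul, one_mul, zero_mul]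
  simp only [hmean, hindicator]
  refine tendsto_integral_mul_of_tendsto hf (fun N => ?_) (fun N x => ?_)
    (fun x => tendsto_cesaro_pow_succ (norm_fourier_apply m x).le)
  · exact (Continuous.aestronglyMeasurable (by fun_prop))
  · exact norm_cesaro_le (fun n => by rw [norm_pow, norm_fourier_apply, one_pow]) N

end Fourier

/-- A measure `μ ∈ M(𝕋)` is represented as `f dν` with `ν` finite and `f ∈ L¹(ν)`. -/
theorem stmt_13 :
    ∃ c : ℝ, 0 < c ∧
      ∀ (ν : Measure (AddCircle (2 * π))), IsFiniteMeasure ν →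
        ∀ f : AddCircle (2 * π) → ℂ, Integrable f ν →
          ∃ n : ℤ, c < ‖(∫ x, fourier (-n) x * f x ∂ν) - (if 0 ≤ n then 1 else 0)‖ := by
  refine ⟨1 / 3, by norm_num, fun ν _ f hf => ?_⟩
  by_contra! h
  set z := ∫ x, {x | fourier 1 x = 1}.indicator f x ∂ν
  have hz_one : ‖z - 1‖ ≤ 1 / 3 := by
    have hlim := tendsto_cesaro_integral_fourier hf (-1)
    simp only [fourier_neg_apply_eq_one_iff] at hlim
    refine norm_sub_le_of_tendsto_cesaro hlim fun n => ?_
    have := h (n + 1)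
    rwa [if_pos (by omega), ← neg_one_mul] at this
  have hz_zero : ‖z - 0‖ ≤ 1 / 3 := by
    refine norm_sub_le_of_tendsto_cesaro (tendsto_cesaro_integral_fourier hf 1) fun n => ?_
    have := h (-(n + 1))
    rwa [if_neg (by omega), neg_neg, ← one_mul ((n : ℤ) + 1)] at this
  have : (1 : ℝ) ≤ ‖z - 0‖ + ‖z - 1‖ := by simpa using norm_sub_le (z - 0) (z - 1)
  linarith
end
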